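/- Let γ be a limit ordinal. If M_0, …, M_r are countable linear orders with rk(M_i) < γ for all i ≤ r, then rk(M_0 + M_1 + … + M_r) < γ, where + denotes ordered sum. -/

import Mathlib

open Ordinal

/-- `RkGE α s` means that the rank of `s`, viewed as a linear order in its own right,
is at least `α`.  (`rk(s) ≥ β + 1` iff there is `c ∈ s` such that both
`{y ∈ s | y < c}` and `{y ∈ s | c < y}` have rank at least `β`; the clauses for `0`
and limit ordinals are folded into the single quantifier `∀ β < α`.) -/
def RkGE {Y : Type*} [LinearOrder Y] : Ordinal → Set Y → Prop :=
  WellFounded.fix (C := fun _ => Set Y → Prop) Ordinal.lt_wf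
    (fun α ih s => ∀ β, ∀ hβ : β < α,
      ∃ c ∈ s, ih β hβ {y ∈ s | y < c} ∧ ih β hβ {y ∈ s | c < y})

/-- `S` is a cut of the finite set `F`: a downward-closed (within `F`) subset of `F`.
For `F = {a_0 < … < a_{m-1}}` the cuts are exactly the `m + 1` lower segments of `F`,
and they index the `m + 1` intervals that `F` determines. -/
def IsCut {Y : Type*} [LinearOrder Y] (F S : Set Y) : Prop :=
  S ⊆ F ∧ ∀ a ∈ F, ∀ b ∈ S, a < b → a ∈ S

/-- The interval of `Y` determined by the cut `S` of `F`: all points lying strictly above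
every element of `S` and strictly below every element of `F \\ S`. -/
def cutInterval {Y : Type*} [LinearOrder Y] (F S : Set Y) : Set Y :=
  {y | (∀ a ∈ S, a < y) ∧ ∀ a ∈ F, a ∉ S → y < a}

/-- `RankGE α F` means `rk_Y(F) ≥ α` for a finite subset `F` of the linear order `Y`:
`rk_Y(F) ≥ β + 1` iff every interval determined by `F` contains a point `c` with
`rk_Y(F ∪ {c}) ≥ β` (the clauses for `0` and limits are folded into `∀ β < α`). -/
def RankGE {Y : Type*} [LinearOrder Y] : Ordinal → Set Y → Prop :=
  WellFounded.fix (C := fun _ => Set Y → Prop) Ordinal.lt_wf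
    (fun α ih F => ∀ β, ∀ hβ : β < α, ∀ S : Set Y, IsCut F S →
      ∃ c ∈ cutInterval F S, ih β hβ (insert c F))

theorem rkGE_iff {Y : Type*} [LinearOrder Y] {α : Ordinal} {s : Set Y} :
    RkGE α s ↔ ∀ β, β < α →
      ∃ c ∈ s, RkGE β {y ∈ s | y < c} ∧ RkGE β {y ∈ s | c < y} := by
  unfold RkGE
  rw [WellFounded.fix_eq]

theorem RkGE.anti {Y : Type*} [LinearOrder Y] {α β : Ordinal} {s : Set Y}
    (h : β ≤ α) (H : RkGE α s) : RkGE β s :=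
  rkGE_iff.mpr fun δ hδ => rkGE_iff.mp H δ (hδ.trans_le h)

theorem RkGE.mono {Y : Type*} [LinearOrder Y] {α : Ordinal} {s t : Set Y}
    (hst : s ⊆ t) (H : RkGE α s) : RkGE α t := by
  induction α using Ordinal.induction generalizing s t with
  | h α ih =>
    rw [rkGE_iff] at H ⊢
    intro β hβ
    obtain ⟨c, hc, hL, hR⟩ := H β hβ
    exact ⟨c, hst hc,
      ih β hβ (fun y hy => ⟨hst hy.1, hy.2⟩) hL,
      ih β hβ (fun y hy => ⟨hst hy.1, hy.2⟩) hR⟩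

theorem rkGE_image_iff {Y Z : Type*} [LinearOrder Y] [LinearOrder Z] (f : Y ↪o Z)
    {α : Ordinal} {s : Set Y} : RkGE α (f '' s) ↔ RkGE α s := by
  induction α using Ordinal.induction generalizing s with
  | h α ih =>
    have key : ∀ c ∈ s, {y ∈ f '' s | y < f c} = f '' {y ∈ s | y < c} ∧
        {y ∈ f '' s | f c < y} = f '' {y ∈ s | c < y} := by
      intro c _
      constructor <;> ext z <;>
        simp only [Set.mem_image, Set.mem_setOf_eq] <;>
        constructor
      · rintro ⟨⟨y, hy, rfl⟩, hlt⟩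
        exact ⟨y, ⟨hy, (f.lt_iff_lt).mp hlt⟩, rfl⟩
      · rintro ⟨y, ⟨hy, hlt⟩, rfl⟩
        exact ⟨⟨y, hy, rfl⟩, f.lt_iff_lt.mpr hlt⟩
      · rintro ⟨⟨y, hy, rfl⟩, hlt⟩
        exact ⟨y, ⟨hy, (f.lt_iff_lt).mp hlt⟩, rfl⟩
      · rintro ⟨y, ⟨hy, hlt⟩, rfl⟩
        exact ⟨⟨y, hy, rfl⟩, f.lt_iff_lt.mpr hlt⟩
    rw [rkGE_iff, rkGE_iff]
    constructor
    · intro H β hβ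
      obtain ⟨z, hz, hL, hR⟩ := H β hβ
      obtain ⟨c, hc, rfl⟩ := hz
      obtain ⟨e1, e2⟩ := key c hc
      rw [e1] at hL; rw [e2] at hR
      exact ⟨c, hc, (ih β hβ).mp hL, (ih β hβ).mp hR⟩
    · intro H β hβ
      obtain ⟨c, hc, hL, hR⟩ := H β hβ
      obtain ⟨e1, e2⟩ := key c hc
      refine ⟨f c, ⟨c, hc, rfl⟩, ?_, ?_⟩
      · rw [e1]; exact (ih β hβ).mpr hL
      · rw [e2]; exact (ih β hβ).mpr hR

/-- The order embedding of a summand into the lexicographic sigma order. -/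
def sumEmb {r : ℕ} (M : Fin (r + 1) → Type*) [∀ i, LinearOrder (M i)]
    (i : Fin (r + 1)) : M i ↪o Lex (Σ i, M i) :=
  OrderEmbedding.ofStrictMono (fun a => toLex ⟨i, a⟩)
    (fun a b h => Sigma.Lex.right a b h)

theorem key_lemma {r : ℕ} {M : Fin (r + 1) → Type*} [∀ i, LinearOrder (M i)] :
    ∀ (k : ℕ) (β : Ordinal) (s : Set (Lex (Σ i, M i))),
      (∀ x ∈ s, r - ((ofLex x).1 : ℕ) ≤ k) → RkGE (β + k) s →
      ∃ i, RkGE β {a : M i | toLex ⟨i, a⟩ ∈ s} := by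
  intro k
  induction k with
  | zero =>
    intro β s hs H
    rw [Nat.cast_zero, add_zero] at H
    refine ⟨Fin.last r, ?_⟩
    have hsub : s ⊆ (sumEmb M (Fin.last r)) '' {a : M (Fin.last r) | toLex ⟨Fin.last r, a⟩ ∈ s} := by
      intro x hx
      obtain ⟨i, a⟩ := x
      have hi : i = Fin.last r := by
        have h1 : r - (i : ℕ) ≤ 0 := hs ⟨i, a⟩ hx
        have h2 : (i : ℕ) ≤ r := Nat.lt_succ_iff.mp i.isLt
        have h3 : ((Fin.last r : Fin (r + 1)) : ℕ) = r := rfl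
        exact Fin.ext (by omega)
      subst hi
      exact ⟨a, hx, rfl⟩
    exact (rkGE_image_iff (sumEmb M (Fin.last r))).mp (H.mono hsub)
  | succ k ih =>
    intro β s hs H
    have hrw : β + ((k : ℕ) + 1 : ℕ) = Order.succ (β + k) := by
      push_cast
      rw [← add_assoc, Ordinal.add_one_eq_succ]
    rw [hrw] at H
    obtain ⟨c, hc, hL, hR⟩ := rkGE_iff.mp H (β + k) (Order.lt_succ _)
    obtain ⟨i, a⟩ := c
    by_cases hik : r - (i : ℕ) ≤ k
    · -- use the right part
      obtain ⟨i', hi'⟩ := ih β _ (fun y hy => by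
        have hyk : r - ((ofLex y).1 : ℕ) ≤ k + 1 := hs y hy.1
        have hile : (i : ℕ) ≤ ((ofLex y).1 : ℕ) := by
          rcases Sigma.Lex.lt_def.mp hy.2 with h' | ⟨h', _⟩
          · exact Fin.le_iff_val_le_val.mp h'.le
          · exact le_of_eq (congrArg Fin.val h')
        omega) hR
      exact ⟨i', hi'.mono (fun b hb => hb.1)⟩
    · -- the left part lives entirely in component `i`
      refine ⟨i, ?_⟩
      have hsub : {y ∈ s | y < toLex ⟨i, a⟩} ⊆
          (sumEmb M i) '' {b : M i | toLex ⟨i, b⟩ ∈ s} := by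
        intro y hy
        obtain ⟨hys, hylt⟩ := hy
        obtain ⟨j, b⟩ := y
        have hj : j = i := by
          have h1 : r - (j : ℕ) ≤ k + 1 := hs ⟨j, b⟩ hys
          have h2 : (j : ℕ) ≤ r := Nat.lt_succ_iff.mp j.isLt
          have h3 : (i : ℕ) ≤ r := Nat.lt_succ_iff.mp i.isLt
          have h4 : r - (i : ℕ) ≤ k + 1 := hs ⟨i, a⟩ hc
          rcases Sigma.Lex.lt_def.mp hylt with h' | ⟨h', _⟩
          · have hlt : (j : ℕ) < (i : ℕ) := h'
            exact absurd hlt (by omega)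
          · exact h'
        subst hj
        exact ⟨b, hys, rfl⟩
      have hβ : RkGE β {y ∈ s | y < toLex ⟨i, a⟩} :=
        hL.anti (le_self_add (a := β) (b := (k : Ordinal)))
      exact (rkGE_image_iff (sumEmb M i)).mp (hβ.mono hsub)

/-- **Lemma 5.11**: if `γ` is a limit ordinal and `M_0, …, M_r` are countable linear orders
of rank `< γ`, then the ordered sum `M_0 + … + M_r` (the lexicographic sigma order) has
rank `< γ`. -/
theorem rank_of_finite_concatenation_lt {γ : Ordinal} (hγ : Order.IsSuccLimit γ) (r : ℕ)
    (M : Fin (r + 1) → Type*) [∀ i, LinearOrder (M i)] [∀ i, Countable (M i)]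
    (h : ∀ i, ¬ RkGE γ (Set.univ : Set (M i))) :
    ¬ RkGE γ (Set.univ : Set (Lex (Σ i, M i))) := by
  -- choose witnesses of failure for each summand
  have h' : ∀ i, ∃ β, β < γ ∧ ¬ ∃ c ∈ (Set.univ : Set (M i)),
      RkGE β {y ∈ (Set.univ : Set (M i)) | y < c} ∧
      RkGE β {y ∈ (Set.univ : Set (M i)) | c < y} := by
    intro i
    by_contra hcon
    push_neg at hcon
    exact h i (rkGE_iff.mpr fun β hβ => hcon β hβ)
  choose B hB1 hB2 using h'
  set α : Ordinal := Finset.univ.sup B + 1 with hα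
  have hαγ : α < γ := by
    rw [hα, Ordinal.add_one_eq_succ]
    refine hγ.succ_lt ?_
    rw [Finset.sup_lt_iff (by simpa using hγ.pos)]
    intro i _
    exact hB1 i
  have hnot : ∀ i, ¬ RkGE α (Set.univ : Set (M i)) := by
    intro i hRk
    refine hB2 i ?_
    have : RkGE (B i + 1) (Set.univ : Set (M i)) :=
      hRk.anti (by
        rw [hα]
        exact add_le_add_left (Finset.le_sup (Finset.mem_univ i)) 1)
    exact rkGE_iff.mp this (B i) (by
      rw [Ordinal.add_one_eq_succ]; exact Order.lt_succ _)
  have haddγ : ∀ n : ℕ, α + n < γ := by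
    intro n
    induction n with
    | zero => simpa using hαγ
    | succ n ihn =>
      have : α + ((n : ℕ) + 1 : ℕ) = Order.succ (α + n) := by
        push_cast
        rw [← add_assoc, Ordinal.add_one_eq_succ]
      rw [this]
      exact hγ.succ_lt ihn
  intro HRk
  have H : RkGE (α + r) (Set.univ : Set (Lex (Σ i, M i))) :=
    HRk.anti (haddγ r).le
  obtain ⟨i, hi⟩ := key_lemma r α Set.univ (fun x _ => Nat.sub_le _ _) H
  have : {a : M i | toLex ⟨i, a⟩ ∈ (Set.univ : Set (Lex (Σ i, M i)))} = Set.univ := by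
    ext a; simp
  rw [this] at hi
  exact hnot i hi
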